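/- In the canonical model of Λ, ⊙_S[α]φ ∈ w if and only if K_αφ ∈ v for every v ∈ α_k[w] with Γ_α^v ⊆ v, where α_k[w] = {v : K_α□ψ ∈ w ⇒ ψ ∈ v} and Γ_α^v = {K_αφ : ⊙_S[α]φ ∈ v}. -/

import Mathlib

/-- Formulas of the language `L_KO`, with operators `□`, `[α]`, `K_α`,
`⊙[α]` (objective ought) and `⊙_S[α]` (subjective ought). -/
inductive Form (Ags : Type) : Type
  | atom : Nat → Form Ags
  | bot  : Form Ags
  | imp  : Form Ags → Form Ags → Form Ags
  | box  : Form Ags → Form Ags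
  | act  : Ags → Form Ags → Form Ags
  | know : Ags → Form Ags → Form Ags
  | obj  : Ags → Form Ags → Form Ags
  | subj : Ags → Form Ags → Form Ags

namespace Form

variable {Ags : Type}

def neg (φ : Form Ags) : Form Ags := imp φ bot
def dia (φ : Form Ags) : Form Ags := neg (box (neg φ))
def conj (φ ψ : Form Ags) : Form Ags := neg (imp φ (neg ψ))
def disj (φ ψ : Form Ags) : Form Ags := imp (neg φ) ψ
def conjl : List (Form Ags) → Form Ags
  | [] => neg bot
  | φ :: l => conj φ (conjl l)

end Form

open Form

/-- The Hilbert-style proof system `Λ`. -/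
inductive Prov {Ags : Type} : Form Ags → Prop
  | pl1 (φ ψ : Form Ags) : Prov (imp φ (imp ψ φ))
  | pl2 (φ ψ χ : Form Ags) :
      Prov (imp (imp φ (imp ψ χ)) (imp (imp φ ψ) (imp φ χ)))
  | pl3 (φ ψ : Form Ags) : Prov (imp (imp (neg φ) (neg ψ)) (imp ψ φ))
  | mp {φ ψ : Form Ags} : Prov (imp φ ψ) → Prov φ → Prov ψ
  -- S5 axioms and necessitation for □
  | boxK (φ ψ : Form Ags) : Prov (imp (box (imp φ ψ)) (imp (box φ) (box ψ)))
  | boxT (φ : Form Ags) : Prov (imp (box φ) φ)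
  | box4 (φ : Form Ags) : Prov (imp (box φ) (box (box φ)))
  | box5 (φ : Form Ags) : Prov (imp (dia φ) (box (dia φ)))
  | boxNec {φ : Form Ags} : Prov φ → Prov (box φ)
  -- S5 axioms and necessitation for [α]
  | actK (a : Ags) (φ ψ : Form Ags) :
      Prov (imp (act a (imp φ ψ)) (imp (act a φ) (act a ψ)))
  | actT (a : Ags) (φ : Form Ags) : Prov (imp (act a φ) φ)
  | act4 (a : Ags) (φ : Form Ags) : Prov (imp (act a φ) (act a (act a φ)))
  | act5 (a : Ags) (φ : Form Ags) :
      Prov (imp (neg (act a φ)) (act a (neg (act a φ))))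
  | actNec {φ : Form Ags} (a : Ags) : Prov φ → Prov (act a φ)
  -- S5 axioms and necessitation for K_α
  | knowK (a : Ags) (φ ψ : Form Ags) :
      Prov (imp (know a (imp φ ψ)) (imp (know a φ) (know a ψ)))
  | knowT (a : Ags) (φ : Form Ags) : Prov (imp (know a φ) φ)
  | know4 (a : Ags) (φ : Form Ags) : Prov (imp (know a φ) (know a (know a φ)))
  | know5 (a : Ags) (φ : Form Ags) :
      Prov (imp (neg (know a φ)) (know a (neg (know a φ))))
  | knowNec {φ : Form Ags} (a : Ags) : Prov φ → Prov (know a φ)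
  -- deontic-epistemic axioms
  | a1 (a : Ags) (φ ψ : Form Ags) :
      Prov (imp (obj a (imp φ ψ)) (imp (obj a φ) (obj a ψ)))
  | a2 (a : Ags) (φ : Form Ags) :
      Prov (imp (box φ) (conj (act a φ) (obj a φ)))
  | a3 (a : Ags) (φ : Form Ags) :
      Prov (disj (box (obj a φ)) (box (neg (obj a φ))))
  | a4 (a : Ags) (φ : Form Ags) : Prov (imp (obj a φ) (obj a (act a φ)))
  | oic (a : Ags) (φ : Form Ags) : Prov (imp (obj a φ) (dia (act a φ)))
  | ia (l : List (Ags × Form Ags)) (h : l.Pairwise fun p q => p.1 ≠ q.1) :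
      Prov (imp (conjl (l.map fun p => dia (act p.1 p.2)))
                (dia (conjl (l.map fun p => act p.1 p.2))))
  | a5 (a : Ags) (φ ψ : Form Ags) :
      Prov (imp (subj a (imp φ ψ)) (imp (subj a φ) (subj a ψ)))
  | a6 (a : Ags) (φ : Form Ags) : Prov (imp (subj a φ) (subj a (know a φ)))
  | oacAx (a : Ags) (φ : Form Ags) : Prov (imp (know a φ) (act a φ))
  | unifH (a : Ags) (φ : Form Ags) :
      Prov (imp (dia (know a φ)) (know a (dia φ)))
  | sN (a : Ags) (φ : Form Ags) : Prov (imp (know a (box φ)) (subj a φ))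
  | sOic (a : Ags) (φ : Form Ags) : Prov (imp (subj a φ) (dia (know a φ)))
  | clAx (a : Ags) (φ : Form Ags) :
      Prov (imp (subj a φ) (know a (box (subj a φ))))
  | objNec {φ : Form Ags} (a : Ags) : Prov φ → Prov (obj a φ)
  | subjNec {φ : Form Ags} (a : Ags) : Prov φ → Prov (subj a φ)

/-- `Λ`-consistency of a set of formulas. -/
def Consistent {Ags : Type} (Γ : Set (Form Ags)) : Prop :=
  ¬ ∃ l : List (Form Ags), (∀ φ ∈ l, φ ∈ Γ) ∧ Prov (imp (conjl l) bot)

/-- Maximal `Λ`-consistent set. -/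
def MCS {Ags : Type} (w : Set (Form Ags)) : Prop :=
  Consistent w ∧ ∀ φ : Form Ags, φ ∈ w ∨ neg φ ∈ w

/-- Canonical relation for `□`. -/
def RboxC {Ags : Type} (w v : Set (Form Ags)) : Prop :=
  ∀ φ : Form Ags, box φ ∈ w → φ ∈ v

/-- Canonical relation for `[α]`. -/
def RactC {Ags : Type} (a : Ags) (w v : Set (Form Ags)) : Prop :=
  ∀ φ : Form Ags, act a φ ∈ w → φ ∈ v

/-- Canonical relation for `K_α`. -/
def RknowC {Ags : Type} (a : Ags) (w v : Set (Form Ags)) : Prop :=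
  ∀ φ : Form Ags, know a φ ∈ w → φ ∈ v

/-- `Σ_α^w = {[α]φ : ⊙[α]φ ∈ w}`. -/
def SigmaSet {Ags : Type} (a : Ags) (w : Set (Form Ags)) : Set (Form Ags) :=
  {ψ | ∃ φ, ψ = act a φ ∧ obj a φ ∈ w}

/-- `Γ_α^w = {K_αφ : ⊙_S[α]φ ∈ w}`. -/
def GammaSet {Ags : Type} (a : Ags) (w : Set (Form Ags)) : Set (Form Ags) :=
  {ψ | ∃ φ, ψ = know a φ ∧ subj a φ ∈ w}

/-- `v ∈ α_k[w]`: the canonical relation of the composite operator `K_α□`. -/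
def alphak {Ags : Type} (a : Ags) (w v : Set (Form Ags)) : Prop :=
  ∀ φ : Form Ags, know a (box φ) ∈ w → φ ∈ v

/-!
The forward direction is axiom Cl: `⊙_S[α]φ ∈ w` gives `K_α□⊙_S[α]φ ∈ w`, so `⊙_S[α]φ ∈ v` and
`K_αφ ∈ Γ_α^v ⊆ v`.

For the converse, suppose `⊙_S[α]φ ∉ w`. Every `ψ ∈ {χ : K_α□χ ∈ w} ∪ Γ_α^w` has `⊙_S[α]ψ ∈ w`
(by s.N and A6). Since `⊙_S[α]` is a normal modality, a derivation of
`K_αφ` from finitely many such formulas would put `⊙_S[α]K_αφ`, hence `⊙_S[α]φ`, into `w`. So these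
formulas together with `¬K_αφ` are consistent, and a Lindenbaum extension `v` lies in `α_k[w]`.
Finally `Γ_α^v ⊆ v`: if `⊙_S[α]χ ∈ v` then `⊙_S[α]χ ∈ w`, for otherwise Cl and the S5 axiom 5 for
`K_α□` (which rests on Unif-H) give `K_α□¬⊙_S[α]χ ∈ w`, i.e. `¬⊙_S[α]χ ∈ v`.
-/

section Canonical

variable {Ags : Type}

inductive Ded : List (Form Ags) → Form Ags → Prop
  | hyp {Γ : List (Form Ags)} {φ : Form Ags} : φ ∈ Γ → Ded Γ φ
  | prov {Γ : List (Form Ags)} {φ : Form Ags} : Prov φ → Ded Γ φ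
  | mp {Γ : List (Form Ags)} {φ ψ : Form Ags} : Ded Γ (imp φ ψ) → Ded Γ φ → Ded Γ ψ

theorem Prov.imp_self (φ : Form Ags) : Prov (imp φ φ) :=
  .mp (.mp (.pl2 φ (imp φ φ) φ) (.pl1 φ (imp φ φ))) (.pl1 φ φ)

namespace Ded

variable {Γ Δ : List (Form Ags)} {φ ψ : Form Ags}

theorem cut (h : Ded Γ φ) (hΓ : ∀ ψ ∈ Γ, Ded Δ ψ) : Ded Δ φ := by
  induction h with
  | hyp h => exact hΓ _ h
  | prov h => exact prov h
  | mp _ _ ih₁ ih₂ => exact mp ih₁ ih₂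

theorem mono (h : Ded Γ φ) (hΓ : Γ ⊆ Δ) : Ded Δ φ :=
  h.cut fun _ hψ => hyp (hΓ hψ)

theorem imp_intro (h : Ded (φ :: Γ) ψ) : Ded Γ (imp φ ψ) := by
  generalize hΔ : φ :: Γ = Δ at h
  induction h with
  | hyp hψ =>
    subst hΔ
    rcases List.mem_cons.mp hψ with rfl | hψ
    · exact prov (Prov.imp_self _)
    · exact mp (prov (Prov.pl1 _ _)) (hyp hψ)
  | prov hψ => exact mp (prov (Prov.pl1 _ _)) (prov hψ)
  | mp _ _ ih₁ ih₂ => exact mp (mp (prov (Prov.pl2 _ _ _)) ih₁) ih₂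

theorem prov_of_nil (h : Ded [] φ) : Prov φ := by
  generalize hΔ : ([] : List (Form Ags)) = Δ at h
  induction h with
  | hyp hψ => subst hΔ; simp at hψ
  | prov hψ => exact hψ
  | mp _ _ ih₁ ih₂ => exact .mp ih₁ ih₂

end Ded

namespace Prov

variable {φ ψ χ : Form Ags}

theorem imp_of_ded (h : Ded [φ] ψ) : Prov (imp φ ψ) :=
  h.imp_intro.prov_of_nil

theorem trans (h₁ : Prov (imp φ ψ)) (h₂ : Prov (imp ψ χ)) : Prov (imp φ χ) :=
  imp_of_ded (.mp (.prov h₂) (.mp (.prov h₁) (.hyp List.mem_cons_self)))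

theorem contrapose (h : Prov (imp φ ψ)) : Prov (imp (neg ψ) (neg φ)) :=
  imp_of_ded (.imp_intro (.mp (.hyp (φ := neg ψ) (by simp)) (.mp (.prov h) (.hyp List.mem_cons_self))))

theorem dni (φ : Form Ags) : Prov (imp φ (neg (neg φ))) :=
  imp_of_ded (.imp_intro (.mp (.hyp List.mem_cons_self) (.hyp (by simp))))

theorem dne (φ : Form Ags) : Prov (imp (neg (neg φ)) φ) :=
  .mp (pl3 φ (neg (neg φ))) (dni (neg φ))

theorem exFalso (φ : Form Ags) : Prov (imp bot φ) :=
  .mp (pl3 φ bot) (.mp (pl1 (neg bot) (neg φ)) (imp_self bot))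

end Prov

namespace Ded

variable {Γ : List (Form Ags)} {φ ψ : Form Ags}

theorem by_contra (h : Ded (neg φ :: Γ) bot) : Ded Γ φ :=
  mp (prov (Prov.dne φ)) h.imp_intro

theorem conj_intro (hφ : Ded Γ φ) (hψ : Ded Γ ψ) : Ded Γ (conj φ ψ) :=
  imp_intro (mp (mp (hyp List.mem_cons_self) (hφ.mono (List.subset_cons_self _ _)))
    (hψ.mono (List.subset_cons_self _ _)))

theorem conj_left (h : Ded Γ (conj φ ψ)) : Ded Γ φ :=
  by_contra <| mp (h.mono (List.subset_cons_self _ _)) <| imp_intro <|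
    mp (prov (Prov.exFalso _)) (mp (hyp (φ := neg φ) (by simp)) (hyp List.mem_cons_self))

theorem conj_right (h : Ded Γ (conj φ ψ)) : Ded Γ ψ :=
  by_contra <| mp (h.mono (List.subset_cons_self _ _)) <|
    mp (prov (Prov.pl1 (neg ψ) φ)) (hyp List.mem_cons_self)

theorem conjl_intro : ∀ {l : List (Form Ags)}, (∀ ψ ∈ l, Ded Γ ψ) → Ded Γ (conjl l)
  | [], _ => prov (Prov.imp_self bot)
  | _ :: _, h => by
    rw [List.forall_mem_cons] at h
    exact conj_intro h.1 (conjl_intro h.2)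

theorem of_conjl : ∀ {l : List (Form Ags)}, Ded Γ (conjl l) → ∀ ψ ∈ l, Ded Γ ψ
  | [], _ => by simp
  | _ :: _, h => List.forall_mem_cons.mpr ⟨conj_left h, of_conjl (conj_right h)⟩

end Ded

theorem prov_conjl_imp_iff {l : List (Form Ags)} {φ : Form Ags} :
    Prov (imp (conjl l) φ) ↔ Ded l φ :=
  ⟨fun h => .mp (.prov h) (Ded.conjl_intro fun _ => .hyp),
    fun h => Prov.imp_of_ded (h.cut (Ded.of_conjl (.hyp List.mem_cons_self)))⟩

theorem consistent_iff {Γ : Set (Form Ags)} :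
    Consistent Γ ↔ ∀ l : List (Form Ags), (∀ φ ∈ l, φ ∈ Γ) → ¬ Ded l bot := by
  simp [Consistent, prov_conjl_imp_iff]

theorem Consistent.mono {Γ Δ : Set (Form Ags)} (h : Consistent Δ) (hΓ : Γ ⊆ Δ) :
    Consistent Γ :=
  fun ⟨l, hl, hp⟩ => h ⟨l, fun φ hφ => hΓ (hl φ hφ), hp⟩

theorem exists_ded_neg_of_not_consistent_insert {Γ : Set (Form Ags)} {φ : Form Ags}
    (h : ¬ Consistent (insert φ Γ)) :
    ∃ l : List (Form Ags), (∀ ψ ∈ l, ψ ∈ Γ) ∧ Ded l (neg φ) := by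
  classical
  obtain ⟨l, hl, hbot⟩ : ∃ l : List (Form Ags), (∀ ψ ∈ l, ψ ∈ insert φ Γ) ∧ Ded l bot := by
    simpa [consistent_iff] using h
  refine ⟨l.filter (· ≠ φ), fun ψ hψ => ?_, Ded.imp_intro (hbot.mono fun ψ hψ => ?_)⟩
  · rw [List.mem_filter, decide_eq_true_iff] at hψ
    exact (hl ψ hψ.1).resolve_left hψ.2
  · by_cases hψφ : ψ = φ <;> simp [hψφ, hψ]

theorem isOfFiniteCharacter_consistent :
    Order.IsOfFiniteCharacter {Γ : Set (Form Ags) | Consistent Γ} := fun _ =>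
  ⟨fun h _ hΔ _ => h.mono hΔ,
    fun h ⟨l, hl, hp⟩ => h {ψ | ψ ∈ l} hl l.finite_toSet ⟨l, fun _ => id, hp⟩⟩

theorem exists_mcs_superset {Γ : Set (Form Ags)} (h : Consistent Γ) : ∃ w, MCS w ∧ Γ ⊆ w := by
  obtain ⟨w, hΓw, hmax⟩ := isOfFiniteCharacter_consistent.exists_maximal h
  refine ⟨w, ⟨hmax.prop, fun φ => ?_⟩, hΓw⟩
  by_contra! hφ
  obtain ⟨l₁, hl₁, h₁⟩ :=
    exists_ded_neg_of_not_consistent_insert fun hc => hφ.1 (hmax.mem_of_prop_insert hc)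
  obtain ⟨l₂, hl₂, h₂⟩ :=
    exists_ded_neg_of_not_consistent_insert fun hc => hφ.2 (hmax.mem_of_prop_insert hc)
  refine consistent_iff.mp hmax.prop (l₁ ++ l₂) (by simpa [or_imp, forall_and] using ⟨hl₁, hl₂⟩)
    (.mp (h₂.mono (List.subset_append_right _ _)) (h₁.mono (List.subset_append_left _ _)))

namespace MCS

variable {w : Set (Form Ags)} {φ ψ : Form Ags}

theorem mem_of_ded (hw : MCS w) {l : List (Form Ags)} (hl : ∀ ψ ∈ l, ψ ∈ w) (h : Ded l φ) :
    φ ∈ w :=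
  (hw.2 φ).resolve_right fun hnφ => consistent_iff.mp hw.1 (neg φ :: l)
    (List.forall_mem_cons.mpr ⟨hnφ, hl⟩) (.mp (.hyp List.mem_cons_self) (h.mono (by simp)))

theorem mem_of_prov (hw : MCS w) (h : Prov φ) : φ ∈ w :=
  hw.mem_of_ded (l := []) (by simp) (.prov h)

theorem mem_of_prov_imp (hw : MCS w) (h : Prov (imp φ ψ)) (hφ : φ ∈ w) : ψ ∈ w :=
  hw.mem_of_ded (l := [φ]) (by simpa) (.mp (.prov h) (.hyp List.mem_cons_self))

theorem neg_mem_of_not_mem (hw : MCS w) (h : φ ∉ w) : neg φ ∈ w :=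
  (hw.2 φ).resolve_left h

theorem not_mem_of_neg_mem (hw : MCS w) (h : neg φ ∈ w) : φ ∉ w := fun hφ =>
  consistent_iff.mp hw.1 [neg φ, φ] (by simp [h, hφ])
    (.mp (.hyp List.mem_cons_self) (.hyp (by simp)))

end MCS

structure IsNormalModality (O : Form Ags → Form Ags) : Prop where
  distrib (φ ψ : Form Ags) : Prov (imp (O (imp φ ψ)) (imp (O φ) (O ψ)))
  nec {φ : Form Ags} : Prov φ → Prov (O φ)

namespace IsNormalModality

variable {O P : Form Ags → Form Ags} {φ ψ : Form Ags}

theorem mono (hO : IsNormalModality O) (h : Prov (imp φ ψ)) : Prov (imp (O φ) (O ψ)) :=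
  .mp (hO.distrib φ ψ) (hO.nec h)

theorem comp (hO : IsNormalModality O) (hP : IsNormalModality P) :
    IsNormalModality fun φ => O (P φ) where
  distrib φ ψ := (hO.mono (hP.distrib φ ψ)).trans (hO.distrib _ _)
  nec h := hO.nec (hP.nec h)

theorem mem_of_ded (hO : IsNormalModality O) {w : Set (Form Ags)} (hw : MCS w) :
    ∀ {l : List (Form Ags)} {φ : Form Ags}, (∀ ψ ∈ l, O ψ ∈ w) → Ded l φ → O φ ∈ w
  | [], _, _, h => hw.mem_of_prov (hO.nec h.prov_of_nil)
  | ψ :: _, φ, hl, h => by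
    rw [List.forall_mem_cons] at hl
    have himp : O (imp ψ φ) ∈ w := hO.mem_of_ded hw hl.2 h.imp_intro
    exact hw.mem_of_ded (l := [O (imp ψ φ), O ψ]) (by simp [himp, hl.1])
      (.mp (.mp (.prov (hO.distrib ψ φ)) (.hyp List.mem_cons_self)) (.hyp (by simp)))

end IsNormalModality

theorem isNormalModality_box : IsNormalModality (box : Form Ags → Form Ags) :=
  ⟨Prov.boxK, Prov.boxNec⟩

theorem isNormalModality_know (a : Ags) : IsNormalModality (know a) :=
  ⟨Prov.knowK a, Prov.knowNec a⟩

theorem isNormalModality_subj (a : Ags) : IsNormalModality (subj a) :=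
  ⟨Prov.a5 a, Prov.subjNec a⟩

namespace Prov

theorem neg_box_imp_box_neg_box (p : Form Ags) : Prov (imp (neg (box p)) (box (neg (box p)))) :=
  (contrapose (isNormalModality_box.mono (dne p))).trans <| (box5 (neg p)).trans <|
    isNormalModality_box.mono (contrapose (isNormalModality_box.mono (dni p)))

theorem dia_box_imp_box (p : Form Ags) : Prov (imp (dia (box p)) (box p)) :=
  (contrapose (neg_box_imp_box_neg_box p)).trans (dne (box p))

/-- By Unif-H, `◇K_α□p → K_α◇□p → K_α□p`. -/
theorem neg_know_box_imp_know_box_neg (a : Ags) (p : Form Ags) :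
    Prov (imp (neg (know a (box p))) (know a (box (neg (know a (box p)))))) := by
  have hdia : Prov (imp (dia (know a (box p))) (know a (box p))) :=
    (unifH a (box p)).trans ((isNormalModality_know a).mono (dia_box_imp_box p))
  exact (know5 a (box p)).trans
    ((isNormalModality_know a).mono ((contrapose hdia).trans (dne _)))

theorem neg_subj_imp_know_box_neg_subj (a : Ags) (φ : Form Ags) :
    Prov (imp (neg (subj a φ)) (know a (box (neg (subj a φ))))) :=
  (contrapose ((knowT a _).trans (boxT _))).trans <| (neg_know_box_imp_know_box_neg a _).trans <|
    ((isNormalModality_know a).comp isNormalModality_box).mono (contrapose (clAx a φ))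

end Prov

variable {a : Ags} {w v : Set (Form Ags)}

theorem subj_mem_of_alphak (hw : MCS w) (hv : MCS v) (hwv : alphak a w v) {χ : Form Ags}
    (hχ : subj a χ ∈ v) : subj a χ ∈ w := by
  by_contra h
  exact hv.not_mem_of_neg_mem (hwv _ (hw.mem_of_prov_imp
    (Prov.neg_subj_imp_know_box_neg_subj a χ) (hw.neg_mem_of_not_mem h))) hχ

theorem gammaSet_subset_of_alphak (hw : MCS w) (hv : MCS v) (hwv : alphak a w v)
    (hΓ : GammaSet a w ⊆ v) : GammaSet a v ⊆ v := by
  rintro _ ⟨χ, rfl, hχ⟩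
  exact hΓ ⟨χ, rfl, subj_mem_of_alphak hw hv hwv hχ⟩

theorem consistent_insert_neg_know_of_subj_not_mem (hw : MCS w) {φ : Form Ags}
    (hφ : subj a φ ∉ w) :
    Consistent (insert (neg (know a φ)) ({χ | know a (box χ) ∈ w} ∪ GammaSet a w)) := by
  by_contra hc
  obtain ⟨l, hl, hded⟩ := exists_ded_neg_of_not_consistent_insert hc
  have hsubj : ∀ χ ∈ l, subj a χ ∈ w := fun χ hχ => by
    rcases hl χ hχ with hχ | ⟨ψ, rfl, hψ⟩
    · exact hw.mem_of_prov_imp (Prov.sN a χ) hχ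
    · exact hw.mem_of_prov_imp (Prov.a6 a ψ) hψ
  exact hφ ((isNormalModality_subj a).mem_of_ded hw hsubj
    (.mp (.prov (Prov.knowT a φ)) (.mp (.prov (Prov.dne _)) hded)))

end Canonical

/-- Existence lemma for the subjective ought: `⊙_S[α]φ ∈ w` iff `K_αφ ∈ v` for
every MCS `v ∈ α_k[w]` with `Γ_α^v ⊆ v`. -/
theorem statement14 {Ags : Type} (a : Ags) (w : Set (Form Ags)) (hw : MCS w)
    (φ : Form Ags) :
    Form.subj a φ ∈ w ↔
      ∀ v, MCS v → alphak a w v → GammaSet a v ⊆ v → Form.know a φ ∈ v := by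
  constructor
  · intro hφ v _ hwv hΓv
    exact hΓv ⟨φ, rfl, hwv _ (hw.mem_of_prov_imp (Prov.clAx a φ) hφ)⟩
  · intro h
    by_contra hφ
    obtain ⟨v, hv, hwv⟩ := exists_mcs_superset (consistent_insert_neg_know_of_subj_not_mem hw hφ)
    have hak : alphak a w v := fun χ hχ => hwv (.inr (.inl hχ))
    have hΓv := gammaSet_subset_of_alphak hw hv hak fun ψ hψ => hwv (.inr (.inr hψ))
    exact hv.not_mem_of_neg_mem (hwv (.inl rfl)) (h v hv hak hΓv)
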